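/- arXiv:2210.09354 — 9 statements merged into one kernel-verified Lean document; each statement's English description precedes it below -/
import Mathlib

section
/- Let W=(u,v) and W'=(u',v') be states with u ≠ u', and suppose the Rankine–Hugoniot condition F(W) − F(W') = s·(W − W') holds for some real speed s. Set U=(u+u')/2, V=(v+v')/2 and Z=(v−v')/(u−u'). Then s = (b₁+1)U + a₁ + Z(V+a₂); if moreover v ≠ v' (so Z ≠ 0), then also s = U + a₄ + (V+a₃)/Z, and the wave-manifold equation (1−Z²)(V+a₂) − Z(b₁U+a₁−a₄) + c = 0 holds. -/
/-- Rankine–Hugoniot relations in the blown-up coordinates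
`U = (u+u')/2`, `V = (v+v')/2`, `Z = (v−v')/(u−u')` for the quadratic flux
`f(u,v) = v²/2 + (b₁+1)u²/2 + a₁u + a₂v`, `g(u,v) = uv + a₃u + a₄v`. -/
theorem stmt0 (a₁ a₂ a₃ a₄ b₁ : ℝ) (hb : b₁ > 1) (c : ℝ) (hc_def : c = a₃ - a₂)
    (hc : c > 0)
    (f g : ℝ → ℝ → ℝ)
    (hf : ∀ u v, f u v = v ^ 2 / 2 + (b₁ + 1) * u ^ 2 / 2 + a₁ * u + a₂ * v)
    (hg : ∀ u v, g u v = u * v + a₃ * u + a₄ * v)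
    (u v u' v' s : ℝ) (hu : u ≠ u')
    (hRH1 : f u v - f u' v' = s * (u - u'))
    (hRH2 : g u v - g u' v' = s * (v - v'))
    (U V Z : ℝ) (hU : U = (u + u') / 2) (hV : V = (v + v') / 2)
    (hZ : Z = (v - v') / (u - u')) :
    s = (b₁ + 1) * U + a₁ + Z * (V + a₂) ∧
    (v ≠ v' →
      s = U + a₄ + (V + a₃) / Z ∧
      (1 - Z ^ 2) * (V + a₂) - Z * (b₁ * U + a₁ - a₄) + c = 0) := by
  have hd : u - u' ≠ 0 := sub_ne_zero.mpr hu
  rw [hf, hf] at hRH1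
  rw [hg, hg] at hRH2
  subst hU hV hZ hc_def
  have h1 : s = (b₁ + 1) * ((u + u') / 2) + a₁ +
      (v - v') / (u - u') * ((v + v') / 2 + a₂) := by
    field_simp
    nlinarith [hRH1, sq_nonneg (u - u')]
  refine ⟨h1, fun hv => ?_⟩
  have he : v - v' ≠ 0 := sub_ne_zero.mpr hv
  have hZne : (v - v') / (u - u') ≠ 0 := div_ne_zero he hd
  have h2 : s = (u + u') / 2 + a₄ + ((v + v') / 2 + a₃) / ((v - v') / (u - u')) := by
    field_simp
    nlinarith [hRH2]
  refine ⟨h2, ?_⟩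
  have h3 := h1.symm.trans h2
  field_simp at h3 ⊢
  linear_combination (-1) * h3
end

section
/- Let z₀, t₀ be real, take Y₀ = 0, and assume t₀z₀(1+z₀²) + 1 ≠ 0. Set z₁ = −(t₀(1+z₀²) − z₀)/(t₀z₀(1+z₀²) + 1). Then the numerator of Y_h factors as Az² + Bz + C = A(z − z₀)(z − z₁); consequently Y_h(z₀) = Y_h(z₁) = 0 (these are the two intersections of the Hugoniot curve through (z₀,t₀,0) with the characteristic surface Y = 0), and z₁ = z₀ if and only if t₀ = 0. -/
/-- with `Y₀ = 0`, the numerator of `Y_h` factors as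
`A(z−z₀)(z−z₁)`, so the Hugoniot curve through `(z₀,t₀,0)` meets the
characteristic surface `Y = 0` at `z₀` and `z₁`, and `z₁ = z₀ ↔ t₀ = 0`. -/
theorem stmt4 (a₁ a₂ a₃ a₄ b₁ : ℝ) (hb : b₁ > 1) (c : ℝ) (hc_def : c = a₃ - a₂)
    (hc : c > 0)
    (z₀ t₀ Y₀ : ℝ) (hY₀ : Y₀ = 0)
    (hden : t₀ * z₀ * (1 + z₀ ^ 2) + 1 ≠ 0)
    (z₁ : ℝ) (hz₁ : z₁ = -(t₀ * (1 + z₀ ^ 2) - z₀) / (t₀ * z₀ * (1 + z₀ ^ 2) + 1))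
    (A B C : ℝ)
    (hA : A = -(2 * c + 2 * c * t₀ * z₀ * (1 + z₀ ^ 2) + Y₀ * (z₀ ^ 2 + 1)))
    (hB : B = 4 * c * z₀ + 2 * c * t₀ * (z₀ ^ 4 - 1) + b₁ * Y₀ * z₀ * (z₀ ^ 2 + 1))
    (hC : C = -2 * c * z₀ ^ 2 + 2 * c * t₀ * z₀ * (1 + z₀ ^ 2) + Y₀ * (z₀ ^ 2 + 1))
    (Yh : ℝ → ℝ)
    (hYh : ∀ z, Yh z =
      (A * z ^ 2 + B * z + C) / ((z₀ ^ 2 + 1) * ((b₁ - 1) * z ^ 2 + 1))) :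
    (∀ z : ℝ, A * z ^ 2 + B * z + C = A * (z - z₀) * (z - z₁)) ∧
    Yh z₀ = 0 ∧ Yh z₁ = 0 ∧ (z₁ = z₀ ↔ t₀ = 0) := by
  subst hY₀ hA hB hC hz₁
  have hfac : ∀ z : ℝ, (-(2 * c + 2 * c * t₀ * z₀ * (1 + z₀ ^ 2) + 0 * (z₀ ^ 2 + 1))) * z ^ 2 +
      (4 * c * z₀ + 2 * c * t₀ * (z₀ ^ 4 - 1) + b₁ * 0 * z₀ * (z₀ ^ 2 + 1)) * z +
      (-2 * c * z₀ ^ 2 + 2 * c * t₀ * z₀ * (1 + z₀ ^ 2) + 0 * (z₀ ^ 2 + 1)) =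
      (-(2 * c + 2 * c * t₀ * z₀ * (1 + z₀ ^ 2) + 0 * (z₀ ^ 2 + 1))) * (z - z₀) *
      (z - -(t₀ * (1 + z₀ ^ 2) - z₀) / (t₀ * z₀ * (1 + z₀ ^ 2) + 1)) := by
    intro z
    field_simp
    ring
  refine ⟨hfac, ?_, ?_, ?_⟩
  · rw [hYh, hfac]; simp
  · rw [hYh, hfac]; simp
  · rw [div_eq_iff hden, neg_eq_iff_eq_neg]
    constructor
    · intro h
      have h2 : t₀ * (1 + z₀ ^ 2) ^ 2 = 0 := by nlinarith [h]
      have : (1 + z₀ ^ 2) ^ 2 > 0 := by positivity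
      nlinarith
    · intro h; subst h; ring
end

section
/- Let z₀, t₀ be real with t₀ ≠ 0, take Y₀ = 0, assume t₀z₀(1+z₀²) + 1 ≠ 0, and set z₁ = −(t₀(1+z₀²) − z₀)/(t₀z₀(1+z₀²) + 1). Then t₀ · t_h(z₁) < 0; i.e., of the two intersection points of the Hugoniot curve through (z₀,t₀,0) with the characteristic surface, one lies in the slow region t < 0 and the other in the fast region t > 0. -/
/-- of the two intersections of the Hugoniot curve through
`(z₀,t₀,0)` (with `t₀ ≠ 0`) with the characteristic surface, one lies in the
slow region `t < 0` and the other in the fast region `t > 0`: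
`t₀ · t_h(z₁) < 0`. -/
theorem stmt5 (a₁ a₂ a₃ a₄ b₁ : ℝ) (hb : b₁ > 1) (c : ℝ) (hc_def : c = a₃ - a₂)
    (hc : c > 0)
    (z₀ t₀ Y₀ : ℝ) (ht₀ : t₀ ≠ 0) (hY₀ : Y₀ = 0)
    (hden : t₀ * z₀ * (1 + z₀ ^ 2) + 1 ≠ 0)
    (z₁ : ℝ) (hz₁ : z₁ = -(t₀ * (1 + z₀ ^ 2) - z₀) / (t₀ * z₀ * (1 + z₀ ^ 2) + 1))
    (D E F G : ℝ)
    (hD : D = 2 * c * b₁ + 2 * c * b₁ * t₀ * z₀ * (z₀ ^ 2 + 1) + b₁ * Y₀ * (z₀ ^ 2 + 1))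
    (hE : E = 2 * c * t₀ * (1 - z₀ ^ 4) - b₁ * z₀ * Y₀ * (z₀ ^ 2 + 1) - 4 * c * z₀)
    (hF : F = 4 * c * (z₀ ^ 2 + 1) + 2 * c * b₁ * t₀ * z₀ * (1 + z₀ ^ 2)
      + b₁ * Y₀ * (z₀ ^ 2 + 1) - 2 * c * b₁ * z₀ ^ 2)
    (hG : G = -4 * c * z₀ + 2 * c * t₀ * (1 - z₀ ^ 4) - b₁ * z₀ * Y₀ * (1 + z₀ ^ 2))
    (th : ℝ → ℝ)
    (hth : ∀ z, th z =
      (D * z ^ 3 + E * z ^ 2 + F * z + G) /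
        (c * (z₀ ^ 2 + 1) * ((b₁ - 1) * z ^ 4 + b₁ * z ^ 2 + 1))) :
    t₀ * th z₁ < 0 := by
  have hc' : c ≠ 0 := ne_of_gt hc
  have hw : (z₀ ^ 2 + 1) ≠ 0 := by positivity
  have hT : (t₀ ^ 2 * (z₀ ^ 2 + 1) ^ 2 + 1) > 0 := by positivity
  have hpoly : (b₁ - 1) * z₁ ^ 4 + b₁ * z₁ ^ 2 + 1 ≠ 0 := by
    nlinarith [sq_nonneg z₁, sq_nonneg (z₁ ^ 2), sq_nonneg (z₁ * z₀)]
  have key : th z₁ = -2 * t₀ * (t₀ * z₀ * (1 + z₀ ^ 2) + 1) ^ 2 /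
      (t₀ ^ 2 * (z₀ ^ 2 + 1) ^ 2 + 1) := by
    rw [hth]
    rw [div_eq_div_iff (mul_ne_zero (mul_ne_zero hc' hw) hpoly) (ne_of_gt hT)]
    subst hD hE hF hG hY₀ hz₁
    field_simp
    ring
  have hQ2 : (0:ℝ) < (t₀ * (t₀ * z₀ * (1 + z₀ ^ 2) + 1)) ^ 2 :=
    lt_of_le_of_ne (sq_nonneg _) (Ne.symm (pow_ne_zero 2 (mul_ne_zero ht₀ hden)))
  have heq : t₀ * th z₁ =
      -2 * (t₀ * (t₀ * z₀ * (1 + z₀ ^ 2) + 1)) ^ 2 / (t₀ ^ 2 * (z₀ ^ 2 + 1) ^ 2 + 1) := by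
    rw [key]; ring
  rw [heq]
  apply div_neg_of_neg_of_pos _ hT
  linarith
end

section
/- Let z₀ be real and take t₀ = 0 and Y₀ = 0 (a point of the coincidence curve). Then for all real z, Y_h(z) = −2c(z−z₀)² / ((z₀²+1)((b₁−1)z²+1)); in particular Y_h(z) ≤ 0 for all z with equality only at z = z₀, so the Hugoniot curve through a coincidence point is tangent to the characteristic surface Y = 0 at z₀ and otherwise lies in the half-space Y < 0. -/
/-- the Hugoniot curve through a coincidence point
`(z₀, 0, 0)` satisfies `Y_h(z) = −2c(z−z₀)²/((z₀²+1)((b₁−1)z²+1))`; it is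
tangent to the characteristic surface `Y = 0` at `z₀` and otherwise lies in
the half-space `Y < 0`. -/
theorem stmt7 (a₁ a₂ a₃ a₄ b₁ : ℝ) (hb : b₁ > 1) (c : ℝ) (hc_def : c = a₃ - a₂)
    (hc : c > 0)
    (z₀ t₀ Y₀ : ℝ) (ht₀ : t₀ = 0) (hY₀ : Y₀ = 0)
    (A B C : ℝ)
    (hA : A = -(2 * c + 2 * c * t₀ * z₀ * (1 + z₀ ^ 2) + Y₀ * (z₀ ^ 2 + 1)))
    (hB : B = 4 * c * z₀ + 2 * c * t₀ * (z₀ ^ 4 - 1) + b₁ * Y₀ * z₀ * (z₀ ^ 2 + 1))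
    (hC : C = -2 * c * z₀ ^ 2 + 2 * c * t₀ * z₀ * (1 + z₀ ^ 2) + Y₀ * (z₀ ^ 2 + 1))
    (Yh : ℝ → ℝ)
    (hYh : ∀ z, Yh z =
      (A * z ^ 2 + B * z + C) / ((z₀ ^ 2 + 1) * ((b₁ - 1) * z ^ 2 + 1))) :
    (∀ z : ℝ, Yh z =
      -2 * c * (z - z₀) ^ 2 / ((z₀ ^ 2 + 1) * ((b₁ - 1) * z ^ 2 + 1))) ∧
    (∀ z : ℝ, Yh z ≤ 0) ∧
    (∀ z : ℝ, Yh z = 0 ↔ z = z₀) := by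
  subst ht₀ hY₀ hA hB hC
  have hform : ∀ z : ℝ, Yh z =
      -2 * c * (z - z₀) ^ 2 / ((z₀ ^ 2 + 1) * ((b₁ - 1) * z ^ 2 + 1)) := by
    intro z; rw [hYh]; ring_nf
  have hden : ∀ z : ℝ, 0 < (z₀ ^ 2 + 1) * ((b₁ - 1) * z ^ 2 + 1) := by
    intro z
    have h1 : (0:ℝ) < z₀ ^ 2 + 1 := by positivity
    have h2 : (0:ℝ) < (b₁ - 1) * z ^ 2 + 1 := by nlinarith [sq_nonneg z]
    exact mul_pos h1 h2
  refine ⟨hform, ?_, ?_⟩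
  · intro z; rw [hform z]
    apply div_nonpos_of_nonpos_of_nonneg
    · nlinarith [sq_nonneg (z - z₀)]
    · exact (hden z).le
  · intro z; rw [hform z]
    rw [div_eq_zero_iff]
    constructor
    · rintro (h | h)
      · have : (z - z₀) ^ 2 = 0 := by nlinarith
        have := pow_eq_zero_iff (n := 2) (by norm_num) |>.mp this
        linarith
      · exact absurd h (hden z).ne'
    · rintro rfl; left; ring
end

section
/- Let z₀, t₀ be real and take Y₀ = 0. Then the discriminant of the numerator of Y_h satisfies B² − 4AC = 4c²t₀²(1+z₀²)⁴; in particular the Hugoniot curve through a point (z₀,t₀,0) of the characteristic surface is tangent to the characteristic surface (B² − 4AC = 0) exactly when t₀ = 0. -/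
/-- with `Y₀ = 0`, the discriminant of the numerator of `Y_h`
satisfies `B² − 4AC = 4c²t₀²(1+z₀²)⁴`; in particular the Hugoniot curve
through `(z₀,t₀,0)` is tangent to the characteristic surface iff `t₀ = 0`. -/
theorem stmt8 (a₁ a₂ a₃ a₄ b₁ : ℝ) (hb : b₁ > 1) (c : ℝ) (hc_def : c = a₃ - a₂)
    (hc : c > 0)
    (z₀ t₀ Y₀ : ℝ) (hY₀ : Y₀ = 0)
    (A B C : ℝ)
    (hA : A = -(2 * c + 2 * c * t₀ * z₀ * (1 + z₀ ^ 2) + Y₀ * (z₀ ^ 2 + 1)))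
    (hB : B = 4 * c * z₀ + 2 * c * t₀ * (z₀ ^ 4 - 1) + b₁ * Y₀ * z₀ * (z₀ ^ 2 + 1))
    (hC : C = -2 * c * z₀ ^ 2 + 2 * c * t₀ * z₀ * (1 + z₀ ^ 2) + Y₀ * (z₀ ^ 2 + 1)) :
    B ^ 2 - 4 * A * C = 4 * c ^ 2 * t₀ ^ 2 * (1 + z₀ ^ 2) ^ 4 ∧
    (B ^ 2 - 4 * A * C = 0 ↔ t₀ = 0) := by
  subst hY₀ hA hB hC
  have h : (4 * c * z₀ + 2 * c * t₀ * (z₀ ^ 4 - 1) + b₁ * 0 * z₀ * (z₀ ^ 2 + 1)) ^ 2 -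
      4 * -(2 * c + 2 * c * t₀ * z₀ * (1 + z₀ ^ 2) + 0 * (z₀ ^ 2 + 1)) *
        (-2 * c * z₀ ^ 2 + 2 * c * t₀ * z₀ * (1 + z₀ ^ 2) + 0 * (z₀ ^ 2 + 1)) =
      4 * c ^ 2 * t₀ ^ 2 * (1 + z₀ ^ 2) ^ 4 := by ring
  refine ⟨h, ?_⟩
  rw [h]
  constructor
  · intro h0
    have hz : (1 + z₀ ^ 2) ^ 4 > 0 := by positivity
    have ht : t₀ ^ 2 = 0 := by
      by_contra hne
      have h2 : t₀ ^ 2 > 0 := lt_of_le_of_ne (sq_nonneg t₀) (Ne.symm hne)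
      have hc2 : (4 : ℝ) * c ^ 2 > 0 := by positivity
      nlinarith [mul_pos (mul_pos hc2 h2) hz]
    exact pow_eq_zero_iff (n := 2) (by norm_num) |>.mp ht
  · intro h0; rw [h0]; ring
end

section
/- For every real z, the state (u₀, v₀) = (u₀(z,0,0), v₀(z,0,0)) obtained from the coincidence curve {t = 0, Y = 0} of the wave manifold satisfies (b₁u₀+a₁−a₄)² + 4(v₀+a₃)(v₀+a₂) = 0; i.e., the coincidence curve projects into the coincidence ellipse in state space. -/
/-- the coincidence curve `{t = 0, Y = 0}` of the wave manifold
projects into the coincidence ellipse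
`(b₁u₀+a₁−a₄)² + 4(v₀+a₃)(v₀+a₂) = 0` in state space. -/
theorem stmt9 (a₁ a₂ a₃ a₄ b₁ : ℝ) (hb : b₁ > 1) (c : ℝ) (hc_def : c = a₃ - a₂)
    (hc : c > 0)
    (u0 v0 : ℝ → ℝ → ℝ → ℝ)
    (hu0 : ∀ z t Y, u0 z t Y =
      (b₁ * z * (z ^ 2 + 1) * Y + 2 * c * (z ^ 4 - 1) * t
        - 2 * (a₁ - a₄) * z ^ 2 + 4 * c * z - 2 * (a₁ - a₄)) /
      (2 * b₁ * (z ^ 2 + 1)))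
    (hv0 : ∀ z t Y, v0 z t Y =
      ((z ^ 2 + 1) * Y + 2 * c * z * (z ^ 2 + 1) * t
        - 2 * a₂ * (z ^ 2 + 1) - 2 * c * z ^ 2) /
      (2 * (z ^ 2 + 1))) :
    ∀ z : ℝ,
      (b₁ * u0 z 0 0 + a₁ - a₄) ^ 2
        + 4 * (v0 z 0 0 + a₃) * (v0 z 0 0 + a₂) = 0 := by
  intro z
  have hz : (z ^ 2 + 1) ≠ 0 := by positivity
  have hb0 : b₁ ≠ 0 := by linarith
  rw [hu0, hv0]
  subst hc_def
  field_simp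
  ring
end

section
/- For every real z, define the hysteresis′ curve point by t_H(z) = −(b₁+2)z((b₁−1)z²+1) / ((z²+1)((b₁+1)²z⁴+2(b₁+3)z²+1)) and Y_H(z) = −2c((b₁−1)z²+1) / ((b₁+1)²z⁴+2(b₁+3)z²+1). Then son′(z, t_H(z), Y_H(z)) = 0, and the state (u₀,v₀) = (u₀(z,t_H(z),Y_H(z)), v₀(z,t_H(z),Y_H(z))) satisfies (b₁u₀+a₁−a₄)² + 4(v₀+a₃)(v₀+a₂) = 0; i.e., the hysteresis′ curve lies on the sonic′ surface and on the saturated surface SCC of the coincidence curve by Hugoniot curves. -/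
/-- the hysteresis′ curve `z ↦ (z, t_H(z), Y_H(z))` lies on the
sonic′ surface and on the saturated surface SCC of the coincidence curve by
Hugoniot curves (its projected state lies on the coincidence ellipse). -/
theorem stmt10 (a₁ a₂ a₃ a₄ b₁ : ℝ) (hb : b₁ > 1) (c : ℝ) (hc_def : c = a₃ - a₂)
    (hc : c > 0)
    (son' : ℝ → ℝ → ℝ → ℝ)
    (hson' : ∀ z t Y, son' z t Y =
      -2 * c * ((b₁ + 1) * z ^ 5 + (b₁ + 4) * z ^ 3 + 3 * z) * t
        + ((b₁ + 1) * z ^ 4 + b₁ * z ^ 2 - 1) * Y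
        - 2 * c * ((b₁ - 1) * z ^ 2 + 1))
    (u0 v0 : ℝ → ℝ → ℝ → ℝ)
    (hu0 : ∀ z t Y, u0 z t Y =
      (b₁ * z * (z ^ 2 + 1) * Y + 2 * c * (z ^ 4 - 1) * t
        - 2 * (a₁ - a₄) * z ^ 2 + 4 * c * z - 2 * (a₁ - a₄)) /
      (2 * b₁ * (z ^ 2 + 1)))
    (hv0 : ∀ z t Y, v0 z t Y =
      ((z ^ 2 + 1) * Y + 2 * c * z * (z ^ 2 + 1) * t
        - 2 * a₂ * (z ^ 2 + 1) - 2 * c * z ^ 2) /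
      (2 * (z ^ 2 + 1)))
    (tH YH : ℝ → ℝ)
    (htH : ∀ z, tH z =
      -((b₁ + 2) * z * ((b₁ - 1) * z ^ 2 + 1)) /
        ((z ^ 2 + 1) * ((b₁ + 1) ^ 2 * z ^ 4 + 2 * (b₁ + 3) * z ^ 2 + 1)))
    (hYH : ∀ z, YH z =
      -(2 * c * ((b₁ - 1) * z ^ 2 + 1)) /
        ((b₁ + 1) ^ 2 * z ^ 4 + 2 * (b₁ + 3) * z ^ 2 + 1)) :
    ∀ z : ℝ,
      son' z (tH z) (YH z) = 0 ∧
      (b₁ * u0 z (tH z) (YH z) + a₁ - a₄) ^ 2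
        + 4 * (v0 z (tH z) (YH z) + a₃) * (v0 z (tH z) (YH z) + a₂) = 0 := by
  intro z
  have hz : (z ^ 2 + 1) > 0 := by positivity
  have hD : (b₁ + 1) ^ 2 * z ^ 4 + 2 * (b₁ + 3) * z ^ 2 + 1 > 0 := by nlinarith [sq_nonneg z, sq_nonneg (z^2)]
  have hb0 : b₁ ≠ 0 := by linarith
  rw [hson', hu0, hv0, htH, hYH]
  subst hc_def
  constructor
  · field_simp
    ring
  · field_simp
    ring
end

section
/- For every (z,t,Y) ∈ ℝ³, the equations son(z,t,Y) = 0 and son′(z,t,Y) = 0 hold simultaneously if and only if ((b₁+1)z²−1)(z²+1)·Y = 0 and z((b₁+1)z⁴+(b₁+4)z²+3)·t + ((b₁−1)z²+1) = 0. Consequently Son ∩ Son′ is the union of the inflection locus {(z,t,0) : z((b₁+1)z⁴+(b₁+4)z²+3)t + (b₁−1)z²+1 = 0} and the two double-sonic straight lines {z = 1/√(b₁+1), t = −b₁√(b₁+1)/(2(b₁+2))} and {z = −1/√(b₁+1), t = b₁√(b₁+1)/(2(b₁+2))}. -/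
/-- `son = 0 ∧ son′ = 0` is equivalent to the stated pair of
equations, and `Son ∩ Son′` is the union of the inflection locus and the two
double-sonic straight lines. -/
theorem stmt13 (b₁ c : ℝ) (hb : b₁ > 1) (hc : c > 0)
    (son son' : ℝ → ℝ → ℝ → ℝ)
    (hson : ∀ z t Y, son z t Y =
      -2 * c * ((b₁ + 1) * z ^ 5 + (b₁ + 4) * z ^ 3 + 3 * z) * t
        - ((b₁ + 1) * z ^ 4 + b₁ * z ^ 2 - 1) * Y
        - 2 * c * ((b₁ - 1) * z ^ 2 + 1))
    (hson' : ∀ z t Y, son' z t Y =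
      -2 * c * ((b₁ + 1) * z ^ 5 + (b₁ + 4) * z ^ 3 + 3 * z) * t
        + ((b₁ + 1) * z ^ 4 + b₁ * z ^ 2 - 1) * Y
        - 2 * c * ((b₁ - 1) * z ^ 2 + 1)) :
    (∀ z t Y : ℝ,
      (son z t Y = 0 ∧ son' z t Y = 0) ↔
      (((b₁ + 1) * z ^ 2 - 1) * (z ^ 2 + 1) * Y = 0 ∧
        z * ((b₁ + 1) * z ^ 4 + (b₁ + 4) * z ^ 2 + 3) * t
          + ((b₁ - 1) * z ^ 2 + 1) = 0)) ∧
    {p : ℝ × ℝ × ℝ | son p.1 p.2.1 p.2.2 = 0 ∧ son' p.1 p.2.1 p.2.2 = 0} =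
      {p : ℝ × ℝ × ℝ | p.2.2 = 0 ∧
        p.1 * ((b₁ + 1) * p.1 ^ 4 + (b₁ + 4) * p.1 ^ 2 + 3) * p.2.1
          + (b₁ - 1) * p.1 ^ 2 + 1 = 0} ∪
      {p : ℝ × ℝ × ℝ | p.1 = 1 / Real.sqrt (b₁ + 1) ∧
        p.2.1 = -(b₁ * Real.sqrt (b₁ + 1)) / (2 * (b₁ + 2))} ∪
      {p : ℝ × ℝ × ℝ | p.1 = -(1 / Real.sqrt (b₁ + 1)) ∧
        p.2.1 = b₁ * Real.sqrt (b₁ + 1) / (2 * (b₁ + 2))} := by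
  have hc' : c ≠ 0 := ne_of_gt hc
  have key : ∀ z t Y : ℝ,
      (son z t Y = 0 ∧ son' z t Y = 0) ↔
      (((b₁ + 1) * z ^ 2 - 1) * (z ^ 2 + 1) * Y = 0 ∧
        z * ((b₁ + 1) * z ^ 4 + (b₁ + 4) * z ^ 2 + 3) * t
          + ((b₁ - 1) * z ^ 2 + 1) = 0) := by
    intro z t Y
    rw [hson, hson']
    constructor
    · rintro ⟨h1, h2⟩
      refine ⟨by linear_combination (h2 - h1) / 2, ?_⟩
      have hB : c * (z * ((b₁ + 1) * z ^ 4 + (b₁ + 4) * z ^ 2 + 3) * t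
          + ((b₁ - 1) * z ^ 2 + 1)) = 0 := by
        linear_combination (-1/4 : ℝ) * h1 + (-1/4 : ℝ) * h2
      exact (mul_eq_zero.mp hB).resolve_left hc'
    · rintro ⟨h1, h2⟩
      exact ⟨by linear_combination (-2 * c) * h2 - h1,
             by linear_combination (-2 * c) * h2 + h1⟩
  refine ⟨key, ?_⟩
  have hb1 : (0 : ℝ) < b₁ + 1 := by linarith
  have h2b : (0 : ℝ) < 2 * (b₁ + 2) := by linarith
  set s := Real.sqrt (b₁ + 1) with hs_def
  have hs : 0 < s := Real.sqrt_pos.mpr hb1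
  have hs2 : s ^ 2 = b₁ + 1 := Real.sq_sqrt hb1.le
  ext ⟨z, t, Y⟩
  simp only [Set.mem_setOf_eq, Set.mem_union, key z t Y]
  constructor
  · rintro ⟨h1, h2⟩
    rcases mul_eq_zero.mp h1 with hz | hY
    · have hu : (b₁ + 1) * z ^ 2 - 1 = 0 := by
        rcases mul_eq_zero.mp hz with h | h
        · exact h
        · nlinarith [sq_nonneg z]
      have hzt : z * t * (4 * (b₁ + 2)) = -(2 * b₁) := by
        linear_combination (b₁ + 1) * h2
          + (-(z * t * (((b₁ + 1) * z ^ 2 - 1) + b₁ + 6)) - (b₁ - 1)) * hu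
      have h0 : (z * s - 1) * (z * s + 1) = 0 := by
        linear_combination hu + z ^ 2 * hs2
      rcases mul_eq_zero.mp h0 with h | h
      · have hzs : z * s = 1 := by linarith [sub_eq_zero.mp h]
        left; right
        constructor
        · rw [eq_div_iff hs.ne']; exact hzs
        · rw [eq_div_iff h2b.ne']
          linear_combination (s / 2) * hzt - 2 * (b₁ + 2) * t * hzs
      · have hzs : z * s = -1 := by linarith [eq_neg_of_add_eq_zero_left h]
        right
        constructor
        · field_simp
          linear_combination hzs
        · rw [eq_div_iff h2b.ne']
          linear_combination (-(s / 2)) * hzt + 2 * (b₁ + 2) * t * hzs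
    · left; left
      exact ⟨hY, by linear_combination h2⟩
  · rintro ((⟨hY, he⟩ | ⟨hz, ht⟩) | ⟨hz, ht⟩)
    · exact ⟨by rw [hY]; ring, by linear_combination he⟩
    · have hzs : z * s = 1 := by rw [hz]; exact one_div_mul_cancel hs.ne'
      have ht' : t * (2 * (b₁ + 2)) = -(b₁ * s) := (eq_div_iff h2b.ne').mp ht
      have hu : (b₁ + 1) * z ^ 2 - 1 = 0 := by
        linear_combination (z * s + 1) * hzs - z ^ 2 * hs2
      have hzt : z * t * (4 * (b₁ + 2)) = -(2 * b₁) := by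
        linear_combination 2 * z * ht' - 2 * b₁ * hzs
      refine ⟨by linear_combination ((z ^ 2 + 1) * Y) * hu, ?_⟩
      have key2 : (b₁ + 1) * (z * ((b₁ + 1) * z ^ 4 + (b₁ + 4) * z ^ 2 + 3) * t
          + ((b₁ - 1) * z ^ 2 + 1)) = 0 := by
        linear_combination hzt
          + (z * t * (((b₁ + 1) * z ^ 2 - 1) + b₁ + 6) + (b₁ - 1)) * hu
      exact (mul_eq_zero.mp key2).resolve_left hb1.ne'
    · have hzs : z * s = -1 := by rw [hz]; field_simp
      have ht' : t * (2 * (b₁ + 2)) = b₁ * s := (eq_div_iff h2b.ne').mp ht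
      have hu : (b₁ + 1) * z ^ 2 - 1 = 0 := by
        linear_combination (z * s - 1) * hzs - z ^ 2 * hs2
      have hzt : z * t * (4 * (b₁ + 2)) = -(2 * b₁) := by
        linear_combination 2 * z * ht' + 2 * b₁ * hzs
      refine ⟨by linear_combination ((z ^ 2 + 1) * Y) * hu, ?_⟩
      have key2 : (b₁ + 1) * (z * ((b₁ + 1) * z ^ 4 + (b₁ + 4) * z ^ 2 + 3) * t
          + ((b₁ - 1) * z ^ 2 + 1)) = 0 := by
        linear_combination hzt
          + (z * t * (((b₁ + 1) * z ^ 2 - 1) + b₁ + 6) + (b₁ - 1)) * hu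
      exact (mul_eq_zero.mp key2).resolve_left hb1.ne'
end

section
/- Let a, b, p, q, f, g, h, s be real numbers with f ≠ 0, and let z₁ ≠ z₂ be real numbers with f·z₁² + g·z₁ + h = 0, f·z₂² + g·z₂ + h = 0, p·z₁ + q ≠ 0 and p·z₂ + q ≠ 0. Then p²h − qpg + q²f ≠ 0, and s lies strictly between the two values (az₁+b)/(pz₁+q) and (az₂+b)/(pz₂+q) (i.e., ((az₁+b)/(pz₁+q) − s)·((az₂+b)/(pz₂+q) − s) < 0) if and only if [(p²h − qpg + q²f)s² + (agq + bpg − 2(aph + bqf))s + a²h − abg + b²f] / (p²h − qpg + q²f) < 0. -/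
/-- the general algebraic criterion for a number `s` to lie
strictly between the values of the Möbius function `z ↦ (az+b)/(pz+q)` at the
two roots `z₁, z₂` of the quadratic `fz² + gz + h`. -/
theorem stmt18 (a b p q f g h s z₁ z₂ : ℝ)
    (hf : f ≠ 0) (hz : z₁ ≠ z₂)
    (h₁ : f * z₁ ^ 2 + g * z₁ + h = 0)
    (h₂ : f * z₂ ^ 2 + g * z₂ + h = 0)
    (hq₁ : p * z₁ + q ≠ 0) (hq₂ : p * z₂ + q ≠ 0) :
    p ^ 2 * h - q * p * g + q ^ 2 * f ≠ 0 ∧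
    (((a * z₁ + b) / (p * z₁ + q) - s) * ((a * z₂ + b) / (p * z₂ + q) - s) < 0 ↔
      ((p ^ 2 * h - q * p * g + q ^ 2 * f) * s ^ 2
        + (a * g * q + b * p * g - 2 * (a * p * h + b * q * f)) * s
        + a ^ 2 * h - a * b * g + b ^ 2 * f) /
        (p ^ 2 * h - q * p * g + q ^ 2 * f) < 0) := by
  have hsub : z₁ - z₂ ≠ 0 := sub_ne_zero.mpr hz
  have hg : g = -f * (z₁ + z₂) := by
    have h3 : (z₁ - z₂) * g = (z₁ - z₂) * (-f * (z₁ + z₂)) := by nlinarith [h₁, h₂]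
    exact mul_left_cancel₀ hsub h3
  have hh : h = f * (z₁ * z₂) := by linear_combination h₁ - z₁ * hg
  have hD : p ^ 2 * h - q * p * g + q ^ 2 * f = f * ((p * z₁ + q) * (p * z₂ + q)) := by
    rw [hg, hh]; ring
  have hDne : p ^ 2 * h - q * p * g + q ^ 2 * f ≠ 0 := by
    rw [hD]; exact mul_ne_zero hf (mul_ne_zero hq₁ hq₂)
  refine ⟨hDne, ?_⟩
  have key : ((a * z₁ + b) / (p * z₁ + q) - s) * ((a * z₂ + b) / (p * z₂ + q) - s)
      = ((p ^ 2 * h - q * p * g + q ^ 2 * f) * s ^ 2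
        + (a * g * q + b * p * g - 2 * (a * p * h + b * q * f)) * s
        + a ^ 2 * h - a * b * g + b ^ 2 * f) /
        (p ^ 2 * h - q * p * g + q ^ 2 * f) := by
    rw [hD, hg, hh]
    have e1 : (a * z₁ + b) / (p * z₁ + q) - s = (a * z₁ + b - s * (p * z₁ + q)) / (p * z₁ + q) := by
      rw [sub_div, mul_div_cancel_right₀ _ hq₁]
    have e2 : (a * z₂ + b) / (p * z₂ + q) - s = (a * z₂ + b - s * (p * z₂ + q)) / (p * z₂ + q) := by
      rw [sub_div, mul_div_cancel_right₀ _ hq₂]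
    rw [e1, e2, div_mul_div_comm, div_eq_div_iff (mul_ne_zero hq₁ hq₂) (mul_ne_zero hf (mul_ne_zero hq₁ hq₂))]
    ring
  rw [key]
end
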